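/- arXiv:1605.08474 — 5 statements merged into one kernel-verified Lean document; each statement's English description precedes it below -/
import Mathlib

section
/- Consider the planar linear ODE system ẋ(t) = −bx(t) + a, ẏ(t) = −dy(t) + cx(t), with a ≥ 0, b, c, d > 0, and let θ > 0. Let (x, y) be a solution defined on ℝ with x(T) = (d/c)θ and y(T) = θ for some time T. If a/b > (d/c)θ, then for every t there does not hold both x(t) < (d/c)θ and y(t) < θ (the trajectory through the corner point never enters the region {x < (d/c)θ, y < θ}). If a/b < (d/c)θ, then for every t there does not hold both x(t) > (d/c)θ and y(t) > θ. -/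
/-!
Multiplying by the integrating factor `exp (b t)` gives `x t - a/b = (x T - a/b) exp (b (T - t))`:
`x` relaxes monotonically towards the focal value `a/b`. If `a/b > (d/c)θ = x T`, then
`x < (d/c)θ` exactly before `T`, so on `[t, T]` the field pushes `y` down wherever `y = θ`;
hence `y > θ` before `T`, and `x t < (d/c)θ`, `y t < θ` cannot hold together. The case
`a/b < (d/c)θ` is the mirror image under `(a, θ, x, y) ↦ (-a, -θ, -x, -y)`.
-/

open Real Set

lemma hasDerivAt_sub_mul_exp {y : ℝ → ℝ} {d θ u t : ℝ}
    (hy : HasDerivAt y (-d * y t + u) t) :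
    HasDerivAt (fun s => (y s - θ) * exp (d * s)) (exp (d * t) * (u - d * θ)) t := by
  have hexp : HasDerivAt (fun s => exp (d * s)) (exp (d * t) * d) t :=
    ((hasDerivAt_id t).const_mul d).exp.congr_deriv (by simp)
  exact ((hy.sub_const θ).mul hexp).congr_deriv (by ring)

lemma relaxation_sub_eq {x : ℝ → ℝ} {a b : ℝ} (hb : b ≠ 0)
    (hx : ∀ t, HasDerivAt x (-b * x t + a) t) (t T : ℝ) :
    x t - a / b = (x T - a / b) * exp (b * (T - t)) := by
  have hw : ∀ s, HasDerivAt (fun s => (x s - a / b) * exp (b * s)) 0 s := fun s =>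
    (hasDerivAt_sub_mul_exp (hx s)).congr_deriv (by field_simp; ring)
  have hconst := is_const_of_deriv_eq_zero (fun s => (hw s).differentiableAt)
    (fun s => (hw s).deriv) t T
  have hsplit : exp (b * T) = exp (b * (T - t)) * exp (b * t) := by rw [← exp_add]; ring_nf
  refine mul_right_cancel₀ (exp_ne_zero (b * t)) ?_
  rw [hconst, hsplit]
  ring

lemma relaxation_lt_iff {x : ℝ → ℝ} {a b : ℝ} (hb : 0 < b)
    (hx : ∀ t, HasDerivAt x (-b * x t + a) t) {s T : ℝ} (hT : x T < a / b) :
    x s < x T ↔ s < T := by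
  have hneg : x T - a / b < 0 := sub_neg.2 hT
  calc x s < x T ↔ x s - a / b < (x T - a / b) * 1 := by rw [mul_one, sub_lt_sub_iff_right]
    _ ↔ 1 < exp (b * (T - s)) := by
        rw [relaxation_sub_eq hb.ne' hx s T, mul_lt_mul_left_of_neg hneg]
    _ ↔ s < T := by rw [one_lt_exp_iff, mul_pos_iff_of_pos_left hb, sub_pos]

lemma lt_of_hasDerivAt_of_forcing_lt {y u : ℝ → ℝ} {d θ t T : ℝ}
    (hy : ∀ s, HasDerivAt y (-d * y s + u s) s) (htT : t < T)
    (hu : ∀ s ∈ Ioo t T, u s < d * θ) (hyT : y T = θ) : θ < y t := by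
  have hw : ∀ s, HasDerivAt (fun s => (y s - θ) * exp (d * s))
      (exp (d * s) * (u s - d * θ)) s :=
    fun s => hasDerivAt_sub_mul_exp (hy s)
  have hanti : StrictAntiOn (fun s => (y s - θ) * exp (d * s)) (Icc t T) := by
    refine strictAntiOn_of_deriv_neg (convex_Icc t T)
      (continuous_iff_continuousAt.2 fun s => (hw s).continuousAt).continuousOn fun s hs => ?_
    rw [interior_Icc] at hs
    rw [(hw s).deriv]
    exact mul_neg_of_pos_of_neg (exp_pos _) (sub_neg.2 (hu s hs))
  have hlt := hanti (left_mem_Icc.2 htT.le) (right_mem_Icc.2 htT.le) htT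
  simp only [hyT, sub_self, zero_mul] at hlt
  exact sub_pos.1 (pos_of_mul_pos_left hlt (exp_pos _).le)

lemma not_lt_corner_of_lt_focal {a b c d θ : ℝ} (hb : 0 < b) (hc : 0 < c)
    {x y : ℝ → ℝ} {T : ℝ}
    (hx : ∀ t, HasDerivAt x (-b * x t + a) t)
    (hy : ∀ t, HasDerivAt y (-d * y t + c * x t) t)
    (hxT : x T = d / c * θ) (hyT : y T = θ) (hfocal : d / c * θ < a / b) (t : ℝ) :
    ¬(x t < d / c * θ ∧ y t < θ) := by
  rintro ⟨hxt, hyt⟩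
  rw [← hxT] at hxt hfocal
  have htT : t < T := (relaxation_lt_iff hb hx hfocal).1 hxt
  have hforcing : ∀ s ∈ Ioo t T, c * x s < d * θ := fun s hs => by
    have hxs : x s < d / c * θ := hxT ▸ (relaxation_lt_iff hb hx hfocal).2 hs.2
    calc c * x s < c * (d / c * θ) := mul_lt_mul_of_pos_left hxs hc
      _ = d * θ := by field_simp
  exact hyt.not_gt (lt_of_hasDerivAt_of_forcing_lt hy htT hforcing hyT)

theorem no_passage_through_corners_general
    (a b c d θ : ℝ) (hb : 0 < b) (hc : 0 < c)
    (x y : ℝ → ℝ) (T : ℝ)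
    (hx : ∀ t, HasDerivAt x (-b * x t + a) t)
    (hy : ∀ t, HasDerivAt y (-d * y t + c * x t) t)
    (hxT : x T = d / c * θ) (hyT : y T = θ) :
    (a / b > d / c * θ → ∀ t : ℝ, ¬(x t < d / c * θ ∧ y t < θ)) ∧
    (a / b < d / c * θ → ∀ t : ℝ, ¬(x t > d / c * θ ∧ y t > θ)) := by
  refine ⟨not_lt_corner_of_lt_focal hb hc hx hy hxT hyT, fun hfocal t ⟨hxt, hyt⟩ => ?_⟩
  have hx' : ∀ t, HasDerivAt (fun s => -x s) (-b * -x t + -a) t := fun t =>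
    (hx t).neg.congr_deriv (by ring)
  have hy' : ∀ t, HasDerivAt (fun s => -y s) (-d * -y t + c * -x t) t := fun t =>
    (hy t).neg.congr_deriv (by ring)
  refine not_lt_corner_of_lt_focal (θ := -θ) hb hc hx' hy' (by rw [hxT, mul_neg])
    (by rw [hyT]) (by rw [neg_div, mul_neg]; linarith) t ⟨?_, neg_lt_neg hyt⟩
  rw [mul_neg]
  exact neg_lt_neg hxt

/-- Lemma 2 of the paper: the trajectory through the corner point
((d/c)θ, θ) never enters the pseudo-state domain 00 = {x < (d/c)θ, y < θ} when the
focal point is to the right (a/b > (d/c)θ), and never enters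
11 = {x > (d/c)θ, y > θ} when a/b < (d/c)θ. -/
theorem no_passage_through_corners
    (a b c d θ : ℝ) (ha : 0 ≤ a) (hb : 0 < b) (hc : 0 < c) (hd : 0 < d) (hθ : 0 < θ)
    (x y : ℝ → ℝ) (T : ℝ)
    (hx : ∀ t, HasDerivAt x (-b * x t + a) t)
    (hy : ∀ t, HasDerivAt y (-d * y t + c * x t) t)
    (hxT : x T = d / c * θ) (hyT : y T = θ) :
    (a / b > d / c * θ → ∀ t : ℝ, ¬(x t < d / c * θ ∧ y t < θ)) ∧
    (a / b < d / c * θ → ∀ t : ℝ, ¬(x t > d / c * θ ∧ y t > θ)) :=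
  no_passage_through_corners_general a b c d θ hb hc x y T hx hy hxT hyT
end

section
/- Consider the planar linear ODE system ẋ(t) = −bx(t) + a, ẏ(t) = −dy(t) + cx(t), with a > 0, b, c, d > 0, and let θ > 0 satisfy ca/(db) > θ (the focal-point y-coordinate lies above the threshold). Let (x, y) be a solution defined for all t ≥ 0 with y(0) < θ. Then there exists T > 0 with y(T) = θ, and at the first such time T one has x(T) > (d/c)θ. (Thus a pair starting below its threshold and switched on must cross x = (d/c)θ before crossing y = θ: the path 00 → 10 → 11.) -/
open Set Filter Topology

/-- if the focal point lies in the domain 11 (ca/(db) > θ) and a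
solution starts with y(0) < θ, then y reaches the threshold θ at some first time
T > 0, at which moment x(T) > (d/c)θ; i.e. the pair follows the path
00 → 10 → 11. -/
theorem switched_on_pair_crosses_x_threshold_first
    (a b c d θ : ℝ) (ha : 0 < a) (hb : 0 < b) (hc : 0 < c) (hd : 0 < d) (hθ : 0 < θ)
    (hfocal : c * a / (d * b) > θ)
    (x y : ℝ → ℝ)
    (hx : ∀ t : ℝ, 0 ≤ t → HasDerivAt x (-b * x t + a) t)
    (hy : ∀ t : ℝ, 0 ≤ t → HasDerivAt y (-d * y t + c * x t) t)
    (hy0 : y 0 < θ) :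
    ∃ T : ℝ, 0 < T ∧ y T = θ ∧ (∀ s : ℝ, 0 ≤ s → s < T → y s < θ) ∧
      x T > d / c * θ := by
  have hkey : θ * (d * b) < c * a := (lt_div_iff₀ (by positivity)).mp hfocal
  have hxc : ∀ t : ℝ, 0 ≤ t → ContinuousAt x t := fun t ht => (hx t ht).continuousAt
  have hyc : ∀ t : ℝ, 0 ≤ t → ContinuousAt y t := fun t ht => (hy t ht).continuousAt
  have hycOn : ∀ s t : ℝ, 0 ≤ s → ContinuousOn y (Icc s t) := fun s t hs u hu =>
    (hyc u (hs.trans hu.1)).continuousWithinAt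
  -- explicit solution for x
  have hxf : ∀ t : ℝ, 0 ≤ t → x t = a / b + (x 0 - a / b) * Real.exp (-(b * t)) := by
    intro t ht
    set h : ℝ → ℝ := fun s => (x s - a / b) * Real.exp (b * s) with hh
    have hder : ∀ s : ℝ, 0 ≤ s → HasDerivAt h 0 s := by
      intro s hs
      have h1 : HasDerivAt (fun u : ℝ => Real.exp (b * u)) (Real.exp (b * s) * b) s :=
        (Real.hasDerivAt_exp (b * s)).comp s ((hasDerivAt_id s).const_mul b |>.congr_deriv
          (by ring))
      have h2 : HasDerivAt h ((-b * x s + a) * Real.exp (b * s)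
          + (x s - a / b) * (Real.exp (b * s) * b)) s :=
        ((hx s hs).sub_const (a / b)).mul h1
      convert h2 using 1
      field_simp
      ring
    have hconst : h t = h 0 := by
      rcases eq_or_lt_of_le ht with rfl | ht'
      · rfl
      · have := constant_of_has_deriv_right_zero (f := h) (a := 0) (b := t)
          (fun u hu => ((hder u hu.1).continuousAt).continuousWithinAt)
          (fun u hu => (hder u hu.1).hasDerivWithinAt)
        exact this t (by constructor <;> linarith)
    have hexp : Real.exp (b * t) ≠ 0 := (Real.exp_pos _).ne'
    have : (x t - a / b) * Real.exp (b * t) = x 0 - a / b := by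
      simpa [hh] using hconst
    have hxt : x t - a / b = (x 0 - a / b) / Real.exp (b * t) := by
      rw [eq_div_iff hexp]; exact this
    rw [Real.exp_neg, ← div_eq_mul_inv]
    linarith [hxt]
  -- eventually c * x t is above d*θ + ε
  set ε : ℝ := (c * a / b - d * θ) / 2 with hε
  have hεpos : 0 < ε := by
    have : d * θ < c * a / b := by rw [lt_div_iff₀ hb]; nlinarith
    simp only [hε]; linarith
  have hlim : Tendsto (fun t : ℝ => |c * (x 0 - a / b)| * Real.exp (-(b * t))) atTop (𝓝 0) := by
    have : Tendsto (fun t : ℝ => -(b * t)) atTop atBot := by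
      apply tendsto_neg_atBot_iff.mpr
      exact Tendsto.const_mul_atTop hb tendsto_id
    simpa using (Real.tendsto_exp_atBot.comp this).const_mul (|c * (x 0 - a / b)|)
  have hev : ∀ᶠ t in atTop, |c * (x 0 - a / b)| * Real.exp (-(b * t)) < ε :=
    hlim.eventually_lt_const hεpos
  obtain ⟨t₀', ht₀'⟩ := hev.exists_forall_of_atTop
  set t₀ : ℝ := max t₀' 0 with ht₀def
  have ht₀0 : 0 ≤ t₀ := le_max_right _ _
  have hxbig : ∀ t : ℝ, t₀ ≤ t → d * θ + ε ≤ c * x t := by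
    intro t ht
    have ht0 : 0 ≤ t := ht₀0.trans ht
    have h1 := ht₀' t ((le_max_left _ _).trans ht)
    have h2 : c * x t = c * a / b + c * (x 0 - a / b) * Real.exp (-(b * t)) := by
      rw [hxf t ht0]; ring
    have h3 : -(|c * (x 0 - a / b)| * Real.exp (-(b * t)))
        ≤ c * (x 0 - a / b) * Real.exp (-(b * t)) := by
      have := abs_nonneg (c * (x 0 - a / b))
      nlinarith [neg_abs_le (c * (x 0 - a / b)), Real.exp_pos (-(b * t))]
    have : c * a / b = d * θ + 2 * ε := by simp only [hε]; ring
    nlinarith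
  -- y must reach θ
  have hreach : ∃ t : ℝ, 0 ≤ t ∧ θ ≤ y t := by
    by_contra hcon
    push_neg at hcon
    have hylt : ∀ t : ℝ, 0 ≤ t → y t < θ := fun t ht => hcon t ht
    set t₁ : ℝ := t₀ + (θ - y t₀) / ε + 1 with ht₁def
    have hyt₀ : y t₀ < θ := hylt t₀ ht₀0
    have ht₁gt : t₀ < t₁ := by
      have : 0 < (θ - y t₀) / ε := div_pos (by linarith) hεpos
      simp only [ht₁def]; linarith
    obtain ⟨ξ, hξ, hslope⟩ := exists_hasDerivAt_eq_slope y (fun s => -d * y s + c * x s)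
      ht₁gt (hycOn t₀ t₁ ht₀0) (fun u hu => hy u (ht₀0.trans hu.1.le))
    have hξ0 : 0 ≤ ξ := ht₀0.trans hξ.1.le
    have hd1 : ε ≤ -d * y ξ + c * x ξ := by
      have h1 := hxbig ξ hξ.1.le
      have h2 := hylt ξ hξ0
      nlinarith
    have : ε * (t₁ - t₀) ≤ y t₁ - y t₀ := by
      rw [hslope] at hd1
      have h4 : 0 < t₁ - t₀ := by linarith
      calc ε * (t₁ - t₀) ≤ (y t₁ - y t₀) / (t₁ - t₀) * (t₁ - t₀) := by
            exact mul_le_mul_of_nonneg_right hd1 h4.le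
        _ = y t₁ - y t₀ := by field_simp
    have h5 : ε * (t₁ - t₀) = (θ - y t₀) + ε := by
      simp only [ht₁def]; field_simp; ring
    have := hylt t₁ (by linarith)
    nlinarith
  obtain ⟨t₂, ht₂0, ht₂⟩ := hreach
  -- first crossing via IVT
  have hSne : ∃ r : ℝ, 0 ≤ r ∧ y r = θ := by
    have h0t : (0:ℝ) ≤ t₂ := ht₂0
    have := intermediate_value_Icc h0t (hycOn 0 t₂ le_rfl)
    obtain ⟨r, hr, hry⟩ := this ⟨hy0.le, ht₂⟩
    exact ⟨r, hr.1, hry⟩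
  set S : Set ℝ := {t : ℝ | 0 ≤ t ∧ y t = θ} with hS
  have hSne' : S.Nonempty := by obtain ⟨r, h1, h2⟩ := hSne; exact ⟨r, h1, h2⟩
  have hSbdd : BddBelow S := ⟨0, fun r hr => hr.1⟩
  set T : ℝ := sInf S with hT
  have hT0 : 0 ≤ T := le_csInf hSne' (fun r hr => hr.1)
  have hyT : y T = θ := by
    by_contra hne
    obtain ⟨δ, hδpos, hδ⟩ := Metric.eventually_nhds_iff.mp
      ((hyc T hT0).eventually_ne hne)
    obtain ⟨s, hsS, hslt⟩ := exists_lt_of_csInf_lt hSne' (show sInf S < T + δ by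
      rw [← hT]; linarith)
    have hTs : T ≤ s := csInf_le hSbdd hsS
    have : dist s T < δ := by
      rw [Real.dist_eq, abs_of_nonneg (by linarith)]; linarith
    exact hδ this hsS.2
  have hTpos : 0 < T := by
    rcases hT0.lt_or_eq with h | h
    · exact h
    · exact absurd hyT (by rw [← h]; exact hy0.ne)
  have hbefore : ∀ s : ℝ, 0 ≤ s → s < T → y s < θ := by
    intro s hs hsT
    rcases lt_trichotomy (y s) θ with h | h | h
    · exact h
    · exact absurd hsT (not_lt.mpr (csInf_le hSbdd ⟨hs, h⟩))
    · obtain ⟨r, hr, hry⟩ := intermediate_value_Icc hs (hycOn 0 s le_rfl) ⟨hy0.le, h.le⟩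
      exact absurd hsT (not_lt.mpr ((csInf_le hSbdd ⟨hr.1, hry⟩).trans hr.2))
  refine ⟨T, hTpos, hyT, hbefore, ?_⟩
  -- final: x T > (d/c) θ
  by_contra hcon
  push_neg at hcon
  set g : ℝ → ℝ := fun s => -d * y s + c * x s with hg
  have hgT : g T ≤ 0 := by
    have : c * x T ≤ c * (d / c * θ) := mul_le_mul_of_nonneg_left hcon hc.le
    have h2 : c * (d / c * θ) = d * θ := by field_simp
    simp only [hg, hyT]
    nlinarith
  have hgd : HasDerivAt g (-d * (-d * y T + c * x T) + c * (-b * x T + a)) T :=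
    ((hy T hT0).const_mul (-d)).add ((hx T hT0).const_mul c)
  -- in both cases, g < 0 on a left interval near T
  have hneg : ∀ᶠ s in 𝓝[<] T, g s < 0 := by
    rcases hgT.lt_or_eq with hlt | heq
    · have := hgd.continuousAt.tendsto.eventually_lt_const hlt
      exact eventually_nhdsWithin_of_eventually_nhds this
    · -- g T = 0, second-order argument: g' (T) > 0
      have hcxT : c * x T = d * θ := by
        have h1 : g T = -d * θ + c * x T := by simp [hg, hyT]
        rw [h1] at heq; linarith
      have hm : 0 < -d * (-d * y T + c * x T) + c * (-b * x T + a) := by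
        have h1 : -d * y T + c * x T = g T := rfl
        rw [h1, ← heq]
        have h2 : c * (-b * x T + a) = -b * (c * x T) + c * a := by ring
        rw [h2, hcxT]
        nlinarith
      have hslope := hasDerivAt_iff_tendsto_slope.mp hgd
      have hslope' : Tendsto (slope g T) (𝓝[<] T) (𝓝 (-d * (-d * y T + c * x T) + c * (-b * x T + a))) :=
        hslope.mono_left (nhdsWithin_mono T (fun s hs => ne_of_lt hs))
      filter_upwards [hslope'.eventually_const_lt hm, self_mem_nhdsWithin] with s hs hs'
      have hsT : s - T < 0 := sub_neg.mpr hs'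
      have hps : 0 < (g s - g T) / (s - T) := by
        rw [slope_def_field] at hs; linarith [hs]
      have h6 := (div_pos_iff.mp hps).resolve_left (fun h => absurd h.2 (not_lt.mpr hsT.le))
      have h7 : g s - g T < 0 := h6.1
      rw [← heq]; linarith
  obtain ⟨l, hl, hIoo⟩ := mem_nhdsLT_iff_exists_Ioo_subset.mp hneg
  set s : ℝ := max ((l + T) / 2) (T / 2) with hsdef
  have hsT : s < T := max_lt (by simp only [Set.mem_Iio] at hl; linarith) (by linarith)
  have hls : l < s := lt_of_lt_of_le (by simp only [Set.mem_Iio] at hl; linarith) (le_max_left _ _)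
  have hs0 : 0 ≤ s := le_trans (by linarith) (le_max_right _ _)
  obtain ⟨ξ, hξ, hξslope⟩ := exists_hasDerivAt_eq_slope y g hsT (hycOn s T hs0)
    (fun u hu => hy u (hs0.trans hu.1.le))
  have hgξ : g ξ < 0 := hIoo ⟨lt_trans hls hξ.1, hξ.2⟩
  have hneg2 : (y T - y s) / (T - s) < 0 := by rw [← hξslope]; exact hgξ
  have hyTs : y T < y s := by
    have hpos : 0 < T - s := by linarith
    have h2 : y T - y s = (y T - y s) / (T - s) * (T - s) :=
      (div_mul_cancel₀ _ (ne_of_gt hpos)).symm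
    have h3 := mul_neg_of_neg_of_pos hneg2 hpos
    linarith
  have h8 := hbefore s hs0 hsT
  rw [hyT] at hyTs
  linarith
end

section
/- Let a, β, γ, κ, θ, q > 0 and b ≥ 0 satisfy a < βγθ/κ < a + b. Then there exists x̄ ∈ (b/β, (a+b)/β) such that, with ȳ = (κ/γ)x̄, one has b + a·ȳ^{1/q}/(ȳ^{1/q} + θ^{1/q}) = βx̄; that is, (x̄, ȳ) is an equilibrium of the planar system ẋ = b + a·H(y, θ, q) − βx, ẏ = κx − γy. -/
/-- The Hill function H(y, θ, q) = y^(1/q) / (y^(1/q) + θ^(1/q)) (real powers). -/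
noncomputable def hill (y θ q : ℝ) : ℝ :=
  y ^ (1 / q) / (y ^ (1 / q) + θ ^ (1 / q))

/-! On `y > 0` the Hill function is continuous with values in `(0, 1)`, so
`g x = b + a H(κx/γ) - βx` satisfies `g(b/β) > 0 > g((a+b)/β)`; the intermediate value
theorem gives a zero of `g`. -/

open Set

section Hill

variable {y θ q : ℝ}

lemma hill_pos (hy : 0 < y) (hθ : 0 < θ) : 0 < hill y θ q :=
  div_pos (Real.rpow_pos_of_pos hy _) (by positivity)

lemma hill_lt_one (hy : 0 < y) (hθ : 0 < θ) : hill y θ q < 1 := by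
  have hθq : 0 < θ ^ (1 / q) := Real.rpow_pos_of_pos hθ _
  rw [hill, div_lt_one (by positivity)]
  linarith

lemma continuousOn_hill (hθ : 0 < θ) : ContinuousOn (fun y ↦ hill y θ q) (Ioi 0) :=
  have hpow : ContinuousOn (fun y : ℝ ↦ y ^ (1 / q)) (Ioi 0) :=
    continuousOn_id.rpow_const fun _ hy ↦ Or.inl (ne_of_gt hy)
  hpow.div (hpow.add continuousOn_const) fun _ hy ↦
    (add_pos (Real.rpow_pos_of_pos hy _) (Real.rpow_pos_of_pos hθ _)).ne'

end Hill

lemma exists_add_mul_eq_mul_of_continuousOn {f : ℝ → ℝ} {a b β : ℝ} (ha : 0 < a) (hβ : 0 < β)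
    (hf : ContinuousOn f (Icc (b / β) ((a + b) / β)))
    (hlo : 0 < f (b / β)) (hhi : f ((a + b) / β) < 1) :
    ∃ x ∈ Ioo (b / β) ((a + b) / β), b + a * f x = β * x := by
  have hle : b / β ≤ (a + b) / β := div_le_div_of_nonneg_right (by linarith) hβ.le
  have hg : ContinuousOn (fun x ↦ b + a * f x - β * x) (Icc (b / β) ((a + b) / β)) := by
    fun_prop
  have hzero : (0 : ℝ) ∈ Ioo (b + a * f ((a + b) / β) - β * ((a + b) / β))
      (b + a * f (b / β) - β * (b / β)) := by
    rw [mul_div_cancel₀ _ hβ.ne', mul_div_cancel₀ _ hβ.ne']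
    constructor <;> nlinarith
  obtain ⟨x, hx, hgx⟩ := intermediate_value_Ioo' hle hg hzero
  exact ⟨x, hx, by linarith⟩

theorem exists_equilibrium_near_threshold_general
    (a b β γ κ θ q : ℝ)
    (ha : 0 < a) (hβ : 0 < β) (hγ : 0 < γ) (hκ : 0 < κ)
    (hθ : 0 < θ)
    (h1 : a < β * γ * θ / κ) (h2 : β * γ * θ / κ < a + b) :
    ∃ xbar ∈ Set.Ioo (b / β) ((a + b) / β),
      b + a * hill (κ / γ * xbar) θ q = β * xbar := by
  have hb : 0 < b := by linarith
  have hy : ∀ x ∈ Icc (b / β) ((a + b) / β), 0 < κ / γ * x := fun x hx ↦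
    mul_pos (div_pos hκ hγ) ((div_pos hb hβ).trans_le hx.1)
  have hle : b / β ≤ (a + b) / β := div_le_div_of_nonneg_right (by linarith) hβ.le
  refine exists_add_mul_eq_mul_of_continuousOn ha hβ ?_ (hill_pos (hy _ (left_mem_Icc.2 hle)) hθ)
    (hill_lt_one (hy _ (right_mem_Icc.2 hle)) hθ)
  exact (continuousOn_hill hθ).comp (continuousOn_const.mul continuousOn_id) hy

/-- if a < βγθ/κ < a + b, then there is an equilibrium (x̄, ȳ) of the
self-regulation system ẋ = b + a·H(y, θ, q) − βx, ẏ = κx − γy, with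
x̄ ∈ (b/β, (a+b)/β) and ȳ = (κ/γ)x̄. -/
theorem exists_equilibrium_near_threshold
    (a b β γ κ θ q : ℝ)
    (ha : 0 < a) (hb : 0 ≤ b) (hβ : 0 < β) (hγ : 0 < γ) (hκ : 0 < κ)
    (hθ : 0 < θ) (hq : 0 < q)
    (h1 : a < β * γ * θ / κ) (h2 : β * γ * θ / κ < a + b) :
    ∃ xbar ∈ Set.Ioo (b / β) ((a + b) / β),
      b + a * hill (κ / γ * xbar) θ q = β * xbar :=
  exists_equilibrium_near_threshold_general a b β γ κ θ q ha hβ hγ hκ hθ h1 h2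
end

section
/- Let θ > 0 and y > 0 with y ≠ θ. Then the partial derivative of the Hill function with respect to y, namely ∂H/∂y(y, θ, q) = θ^{1/q} y^{1/q − 1} / ( q (y^{1/q} + θ^{1/q})² ), converges to 0 as q → 0⁺. -/
open Filter Set Topology

/-! Write `a = y^(1/q)` and `b = θ^(1/q)`; the derivative is `y⁻¹ · ab / (q (a + b)²)`.
Since `ab / (a + b)² ≤ a / b`, for `y < θ` it is at most `y⁻¹ (y / θ)^(1/q) / q`, which
tends to `0` because `t · c^t → 0` as `t → ∞` for `0 < c < 1`; the case `θ < y` is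
symmetric. -/

lemma tendsto_mul_rpow_atTop_nhds_zero {c : ℝ} (hc0 : 0 < c) (hc1 : c < 1) :
    Tendsto (fun t : ℝ => t * c ^ t) atTop (𝓝 0) := by
  refine (tendsto_rpow_mul_exp_neg_mul_atTop_nhds_zero 1 (-Real.log c)
    (neg_pos.2 (Real.log_neg hc0 hc1))).congr fun t => ?_
  rw [Real.rpow_one, neg_neg, Real.rpow_def_of_pos hc0, mul_comm t]

lemma tendsto_rpow_one_div_div_nhdsGT_zero {c : ℝ} (hc0 : 0 < c) (hc1 : c < 1) :
    Tendsto (fun q : ℝ => c ^ (1 / q) / q) (𝓝[>] 0) (𝓝 0) := by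
  refine ((tendsto_mul_rpow_atTop_nhds_zero hc0 hc1).comp tendsto_inv_nhdsGT_zero).congr
    fun q => ?_
  rw [Function.comp_apply, one_div, div_eq_inv_mul]

lemma mul_div_add_sq_le_div {a b : ℝ} (ha : 0 ≤ a) (hb : 0 < b) :
    a * b / (a + b) ^ 2 ≤ a / b := by
  rw [div_le_div_iff₀ (by positivity) hb]
  nlinarith [mul_nonneg (mul_nonneg ha ha) hb.le, mul_nonneg (mul_nonneg ha hb.le) hb.le]

lemma tendsto_rpow_mul_rpow_div_mul_add_sq {a b : ℝ} (ha : 0 < a) (hb : 0 < b) (hne : a ≠ b) :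
    Tendsto (fun q : ℝ => a ^ (1 / q) * b ^ (1 / q) / (q * (a ^ (1 / q) + b ^ (1 / q)) ^ 2))
      (𝓝[>] 0) (𝓝 0) := by
  wlog hab : a < b generalizing a b
  · refine (this hb ha hne.symm (hne.symm.lt_of_le (not_lt.1 hab))).congr fun q => ?_
    rw [mul_comm, add_comm]
  refine squeeze_zero' ?_ ?_ (tendsto_rpow_one_div_div_nhdsGT_zero (div_pos ha hb)
    ((div_lt_one hb).2 hab))
  · filter_upwards [self_mem_nhdsWithin] with q (hq : 0 < q)
    positivity
  · filter_upwards [self_mem_nhdsWithin] with q (hq : 0 < q)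
    rw [mul_comm q, ← div_div, Real.div_rpow ha.le hb.le]
    exact div_le_div_of_nonneg_right (mul_div_add_sq_le_div (by positivity) (by positivity)) hq.le

/-- for y ≠ θ, the partial derivative of the Hill function,
∂H/∂y(y, θ, q) = θ^(1/q) y^(1/q−1) / (q (y^(1/q) + θ^(1/q))²), tends to 0 as
q → 0⁺. -/
theorem hill_deriv_tendsto_zero (θ y : ℝ) (hθ : 0 < θ) (hy : 0 < y) (hne : y ≠ θ) :
    Tendsto
      (fun q : ℝ => θ ^ (1 / q) * y ^ (1 / q - 1) /
        (q * (y ^ (1 / q) + θ ^ (1 / q)) ^ 2))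
      (nhdsWithin 0 (Ioi 0)) (nhds 0) := by
  have h := (tendsto_rpow_mul_rpow_div_mul_add_sq hy hθ hne).const_mul y⁻¹
  rw [mul_zero] at h
  refine h.congr fun q => ?_
  rw [Real.rpow_sub hy, Real.rpow_one]
  ring
end

section
/- Consider a monotone negative feedback loop in 2n variables: ẇ₁ = −b₁w₁ + a₁f₁(w_{2n}); for each even index i, ẇᵢ = −dᵢwᵢ + cᵢw_{i−1}; and for each odd index i ≥ 3, ẇᵢ = −bᵢwᵢ + aᵢfᵢ(w_{i−1}); where all constants aᵢ, bᵢ, cᵢ, dᵢ are strictly positive, each fᵢ : ℝ → ℝ is continuous and monotone with 0 ≤ fᵢ ≤ 1, and an odd number of the functions fᵢ are antitone (nonincreasing) while the rest are isotone (nondecreasing). Then the system has exactly one equilibrium point, i.e., exactly one w ∈ ℝ^{2n} at which all right-hand sides vanish. -/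
/-! Eliminating `x`, an equilibrium is the same as a solution of the cyclic system
`yᵢ = gᵢ (yᵢ₋₁)` with `gᵢ = (cᵢ aᵢ / (dᵢ bᵢ)) • fᵢ`. Such a solution is determined by `yₙ`, which
must be a fixed point of the loop map `gₙ ∘ ⋯ ∘ g₀`. The loop map is continuous with bounded
range, and antitone because an odd number of its factors are antitone, so it has exactly one fixed
point. -/

open Finset Function Fin.NatCast

theorem Antitone.isFixedPt_eq {α : Type*} [LinearOrder α] {f : α → α} (hf : Antitone f)
    {x y : α} (hx : IsFixedPt f x) (hy : IsFixedPt f y) : x = y := by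
  rcases le_total x y with h | h
  · exact le_antisymm h (hy.symm.le.trans ((hf h).trans hx.le))
  · exact le_antisymm (hx.symm.le.trans ((hf h).trans hy.le)) h

theorem existsUnique_isFixedPt_of_antitone {α : Type*} [ConditionallyCompleteLinearOrder α]
    [TopologicalSpace α] [OrderTopology α] [DenselyOrdered α] {f : α → α} {lo hi : α}
    (hc : Continuous f) (ha : Antitone f) (hf : ∀ t, f t ∈ Set.Icc lo hi) :
    ∃! t, IsFixedPt f t := by
  obtain ⟨t, -, ht⟩ := exists_mem_Icc_isFixedPt_of_mapsTo hc.continuousOn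
    ((hf lo).1.trans (hf lo).2) (fun t _ => hf t)
  exact ⟨t, ht, fun u hu => ha.isFixedPt_eq hu ht⟩

section CompChain

variable {α : Type*}

def compChain (g : ℕ → α → α) : ℕ → α → α
  | 0 => g 0
  | k + 1 => g (k + 1) ∘ compChain g k

@[simp] theorem compChain_succ (g : ℕ → α → α) (k : ℕ) :
    compChain g (k + 1) = g (k + 1) ∘ compChain g k := rfl

theorem continuous_compChain [TopologicalSpace α] {g : ℕ → α → α} (hg : ∀ k, Continuous (g k))
    (k : ℕ) : Continuous (compChain g k) := by
  induction k with
  | zero => exact hg 0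
  | succ k ih => exact (hg _).comp ih

theorem compChain_mem_range (g : ℕ → α → α) (k : ℕ) (t : α) :
    compChain g k t ∈ Set.range (g k) := by
  cases k <;> exact Set.mem_range_self _

theorem compChain_monotone_antitone [Preorder α] {g : ℕ → α → α} {P : ℕ → Prop} [DecidablePred P]
    (hanti : ∀ k, P k → Antitone (g k)) (hmono : ∀ k, ¬P k → Monotone (g k)) (k : ℕ) :
    (Even #{j ∈ range (k + 1) | P j} → Monotone (compChain g k)) ∧
      (Odd #{j ∈ range (k + 1) | P j} → Antitone (compChain g k)) := by
  induction k with
  | zero =>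
    by_cases h : P 0 <;> simp [compChain, filter_singleton, h, hanti, hmono]
  | succ k ih =>
    rw [range_add_one, filter_insert]
    by_cases h : P (k + 1)
    · rw [if_pos h, card_insert_of_notMem (by simp), Nat.even_add_one, Nat.odd_add_one,
        Nat.not_even_iff_odd, Nat.not_odd_iff_even, compChain_succ]
      exact ⟨fun he => (hanti _ h).comp (ih.2 he),
        fun he => (hanti _ h).comp_monotone (ih.1 he)⟩
    · rw [if_neg h, compChain_succ]
      exact ⟨fun he => (hmono _ h).comp (ih.1 he),
        fun he => (hmono _ h).comp_antitone (ih.2 he)⟩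

end CompChain

theorem Fin.zero_sub_one_eq_last (n : ℕ) : (0 : Fin (n + 1)) - 1 = Fin.last n := by
  ext; simp

theorem Fin.succ_sub_one_eq_castSucc {n : ℕ} (i : Fin n) : i.succ - 1 = i.castSucc := by
  rw [← Fin.coeSucc_eq_succ, add_sub_cancel_right]

theorem card_filter_range_natCast_mem {n : ℕ} (s : Finset (Fin (n + 1))) :
    #{j ∈ range (n + 1) | ((j : ℕ) : Fin (n + 1)) ∈ s} = #s := by
  refine card_nbij' (fun j => (j : Fin (n + 1))) Fin.val (fun j hj => (mem_filter.1 hj).2)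
    (fun i hi => mem_filter.2 ⟨mem_range.2 i.isLt, by rwa [Fin.cast_val_eq_self]⟩)
    (fun j hj => Fin.val_cast_of_lt (mem_range.1 (mem_filter.1 hj).1))
    (fun i _ => Fin.cast_val_eq_self i)

section Cyclic

variable {α : Type*} {n : ℕ} (g : Fin (n + 1) → α → α)

theorem compChain_val_succ (i : Fin n) (t : α) :
    compChain (fun j : ℕ => g j) i.succ t =
      g i.succ (compChain (fun j : ℕ => g j) i.castSucc t) := by
  simp only [Fin.val_succ, compChain_succ, comp_apply, Fin.val_castSucc]
  rw [← Fin.val_succ, Fin.cast_val_eq_self]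

theorem eq_compChain_last_of_forall_eq_sub_one {y : Fin (n + 1) → α}
    (hy : ∀ i, y i = g i (y (i - 1))) (i : Fin (n + 1)) :
    y i = compChain (fun j : ℕ => g j) i (y (Fin.last n)) := by
  induction i using Fin.induction with
  | zero => rw [hy 0, Fin.zero_sub_one_eq_last]; rfl
  | succ i ih =>
    rw [hy, compChain_val_succ, ← ih, Fin.succ_sub_one_eq_castSucc]

theorem existsUnique_forall_eq_sub_one
    (h : ∃! t, IsFixedPt (compChain (fun j : ℕ => g j) n) t) :
    ∃! y : Fin (n + 1) → α, ∀ i, y i = g i (y (i - 1)) := by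
  obtain ⟨t, ht, ht_unique⟩ := h
  refine ⟨fun i => compChain (fun j : ℕ => g j) i t, fun i => ?_, fun y hy => ?_⟩
  · cases i using Fin.cases with
    | zero =>
      simp only [Fin.zero_sub_one_eq_last, Fin.val_last, ht.eq]
      rfl
    | succ i => exact (compChain_val_succ g i t).trans (by rw [Fin.succ_sub_one_eq_castSucc])
  · have hlast := eq_compChain_last_of_forall_eq_sub_one g hy (Fin.last n)
    rw [← ht_unique _ hlast.symm]
    exact funext (eq_compChain_last_of_forall_eq_sub_one g hy)

end Cyclic

theorem equilibrium_iff {a b c d x y z : ℝ} (hb : b ≠ 0) (hd : d ≠ 0) :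
    -b * x + a * z = 0 ∧ -d * y + c * x = 0 ↔ x = a * z / b ∧ y = c * a / (d * b) * z := by
  constructor
  · rintro ⟨hx, hy⟩
    have hx' : x = a * z / b := by field_simp; linarith
    refine ⟨hx', ?_⟩
    subst hx'
    field_simp at hy ⊢
    linarith
  · rintro ⟨rfl, rfl⟩
    constructor <;> field_simp <;> ring

/-- Lemma 3 of the paper: a monotone negative feedback loop has
exactly one equilibrium.  Writing the 2(n+1) variables as n+1 pairs
(xᵢ, yᵢ) = (w_{2i+1}, w_{2i+2}) with dynamics ẋᵢ = −bᵢxᵢ + aᵢfᵢ(y_{i−1})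
(indices cyclic) and ẏᵢ = −dᵢyᵢ + cᵢxᵢ, where all constants are positive, each
fᵢ is continuous and monotone with values in [0, 1], and the set of antitone
regulation functions has odd cardinality, there is a unique point at which all
right-hand sides vanish. -/
theorem negative_feedback_loop_unique_equilibrium
    (n : ℕ)
    (a b c d : Fin (n + 1) → ℝ) (f : Fin (n + 1) → ℝ → ℝ)
    (ha : ∀ i, 0 < a i) (hb : ∀ i, 0 < b i) (hc : ∀ i, 0 < c i) (hd : ∀ i, 0 < d i)
    (hfc : ∀ i, Continuous (f i))
    (hf0 : ∀ i z, 0 ≤ f i z) (hf1 : ∀ i z, f i z ≤ 1)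
    (s : Finset (Fin (n + 1))) (hodd : Odd s.card)
    (hanti : ∀ i ∈ s, Antitone (f i)) (hmono : ∀ i ∉ s, Monotone (f i)) :
    ∃! p : (Fin (n + 1) → ℝ) × (Fin (n + 1) → ℝ),
      ∀ i, -b i * p.1 i + a i * f i (p.2 (i - 1)) = 0 ∧
        -d i * p.2 i + c i * p.1 i = 0 := by
  set K : Fin (n + 1) → ℝ := fun i => c i * a i / (d i * b i)
  have hK : ∀ i, 0 ≤ K i := fun i =>
    (div_pos (mul_pos (hc i) (ha i)) (mul_pos (hd i) (hb i))).le
  set g : Fin (n + 1) → ℝ → ℝ := fun i z => K i * f i z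
  have hfix : ∃! t, IsFixedPt (compChain (fun j : ℕ => g j) n) t := by
    refine existsUnique_isFixedPt_of_antitone (lo := 0) (hi := K n)
      (continuous_compChain (fun j => continuous_const.mul (hfc _)) n) ?_ fun t => ?_
    · refine (compChain_monotone_antitone (P := fun j : ℕ => (j : Fin (n + 1)) ∈ s)
        (fun j hj => (hanti _ hj).const_mul (hK _))
        (fun j hj => (hmono _ hj).const_mul (hK _)) n).2 ?_
      rwa [card_filter_range_natCast_mem]
    · obtain ⟨z, hz⟩ := compChain_mem_range (fun j : ℕ => g j) n t
      rw [← hz]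
      exact ⟨mul_nonneg (hK _) (hf0 _ _), mul_le_of_le_one_right (hK _) (hf1 _ _)⟩
  obtain ⟨y, hy, hy_unique⟩ := existsUnique_forall_eq_sub_one g hfix
  have hequil : ∀ p : (Fin (n + 1) → ℝ) × (Fin (n + 1) → ℝ),
      (∀ i, -b i * p.1 i + a i * f i (p.2 (i - 1)) = 0 ∧ -d i * p.2 i + c i * p.1 i = 0) ↔
        p.1 = (fun i => a i * f i (p.2 (i - 1)) / b i) ∧ ∀ i, p.2 i = g i (p.2 (i - 1)) := by
    intro p
    simp only [funext_iff, ← forall_and]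
    exact forall_congr' fun i => equilibrium_iff (hb i).ne' (hd i).ne'
  refine ⟨(fun i => a i * f i (y (i - 1)) / b i, y), (hequil _).2 ⟨rfl, hy⟩, fun p hp => ?_⟩
  obtain ⟨hp1, hp2⟩ := (hequil p).1 hp
  obtain rfl := hy_unique p.2 hp2
  exact Prod.ext hp1 rfl
end
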